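/- (Weak completeness) Every sequent A ⊢ B of L₁-formulas that is valid in every Došen frame is provable in IDFNL. -/

import Mathlib

/-- Formulas of the language L₁. `ldiv A B` is A∖B, `rdiv B A` is B/A,
`ildiv A B` is A∖∖B (iterative left division), `irdiv B A` is B//A. -/
inductive Fm : Type where
  | var : ℕ → Fm
  | top : Fm
  | bot : Fm
  | and : Fm → Fm → Fm
  | or : Fm → Fm → Fm
  | prod : Fm → Fm → Fm
  | ldiv : Fm → Fm → Fm
  | rdiv : Fm → Fm → Fm
  | ildiv : Fm → Fm → Fm
  | irdiv : Fm → Fm → Fm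

/-- A Došen model on the set of states `S`: a ternary relation and a valuation. -/
structure DosenModel (S : Type*) where
  R : S → S → S → Prop
  V : ℕ → Set S

/-- `Rleft R x̄ s t` is the relation R⃖x̄ s t for a path x̄ (nonempty list). -/
def Rleft {S : Type*} (R : S → S → S → Prop) : List S → S → S → Prop
  | [], _, _ => False
  | [x], s, t => R x s t
  | x :: y :: xs, s, t => ∃ z, R x s z ∧ Rleft R (y :: xs) z t

/-- `Rright R s x̄ t` is the relation R s x̄⃗ t for a path x̄ (nonempty list). -/
def Rright {S : Type*} (R : S → S → S → Prop) : S → List S → S → Prop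
  | _, [], _ => False
  | s, [x], t => R s x t
  | s, x :: y :: xs, t => ∃ z, R s x z ∧ Rright R z (y :: xs) t

/-- Satisfaction: `sat M A s` means s ⊨ A in the model M. -/
def sat {S : Type*} (M : DosenModel S) : Fm → S → Prop
  | .var p, s => s ∈ M.V p
  | .top, _ => True
  | .bot, _ => False
  | .and A B, s => sat M A s ∧ sat M B s
  | .or A B, s => sat M A s ∨ sat M B s
  | .prod A B, s => ∃ t u, M.R t u s ∧ sat M A t ∧ sat M B u
  | .ldiv A B, s => ∀ t u, M.R t s u → sat M A t → sat M B u
  | .rdiv B A, s => ∀ t u, M.R s t u → sat M A t → sat M B u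
  | .ildiv A B, s =>
      ∀ (xs : List S) (t : S), xs ≠ [] → Rleft M.R xs s t → (∀ x ∈ xs, sat M A x) → sat M B t
  | .irdiv B A, s =>
      ∀ (xs : List S) (t : S), xs ≠ [] → Rright M.R s xs t → (∀ x ∈ xs, sat M A x) → sat M B t

/-- Validity of the sequent A ⊢ B in a model. -/
def valid {S : Type*} (M : DosenModel S) (A B : Fm) : Prop :=
  ∀ s, sat M A s → sat M B s

/-- `ldivN A B n` is A∖ⁿB (meaningful for n ≥ 1): A∖¹B = A∖B, A∖ⁿ⁺¹B = A∖(A∖ⁿB). -/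
def ldivN (A B : Fm) : ℕ → Fm
  | 0 => B
  | n + 1 => .ldiv A (ldivN A B n)

/-- `rdivN B A n` is B/ⁿA (meaningful for n ≥ 1): B/¹A = B/A, B/ⁿ⁺¹A = (B/ⁿA)/A. -/
def rdivN (B A : Fm) : ℕ → Fm
  | 0 => B
  | n + 1 => .rdiv (rdivN B A n) A

/-- `RIter R n` is the relation Rⁿ⁺¹ of the paper: R¹ = R,
R^{n+1} s t u iff ∃ x y, R s y u ∧ Rⁿ x t y. -/
def RIter {S : Type*} (R : S → S → S → Prop) : ℕ → S → S → S → Prop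
  | 0, s, t, u => R s t u
  | n + 1, s, t, u => ∃ x y, R s y u ∧ RIter R n x t y

/-- The left transitive closure R⁺ˡ = ⋃_{n ≥ 1} Rⁿ. -/
def RplusL {S : Type*} (R : S → S → S → Prop) (s t u : S) : Prop :=
  ∃ n, RIter R n s t u

/-- Provability in the axiom system IDFNL. `Prov A B` means A ⟶ B. -/
inductive Prov : Fm → Fm → Prop
  | id (A : Fm) : Prov A A
  | top (A : Fm) : Prov A .top
  | bot (A : Fm) : Prov .bot A
  | andE1 (A B : Fm) : Prov (A.and B) A
  | andE2 (A B : Fm) : Prov (A.and B) B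
  | orI1 (A B : Fm) : Prov A (A.or B)
  | orI2 (A B : Fm) : Prov B (A.or B)
  | distrib (A B C : Fm) : Prov (A.and (B.or C)) ((A.and B).or (A.and C))
  | ildivAnd (A B C : Fm) : Prov ((A.ildiv B).and (A.ildiv C)) (A.ildiv (B.and C))
  | ildivUnfold (A B : Fm) : Prov (A.ildiv B) ((A.ldiv B).and (A.ldiv (A.ildiv B)))
  | ildivFold (A B : Fm) : Prov ((A.ldiv B).and (A.ldiv (A.ildiv B))) (A.ildiv B)
  | irdivAnd (A B C : Fm) : Prov ((B.irdiv A).and (C.irdiv A)) ((B.and C).irdiv A)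
  | irdivUnfold (A B : Fm) : Prov (B.irdiv A) ((B.rdiv A).and ((B.irdiv A).rdiv A))
  | irdivFold (A B : Fm) : Prov (((B.irdiv A).rdiv A).and (B.rdiv A)) (B.irdiv A)
  | resL1 {A B C : Fm} : Prov (A.prod B) C → Prov B (A.ldiv C)
  | resL2 {A B C : Fm} : Prov B (A.ldiv C) → Prov (A.prod B) C
  | resR1 {A B C : Fm} : Prov (A.prod B) C → Prov A (C.rdiv B)
  | resR2 {A B C : Fm} : Prov A (C.rdiv B) → Prov (A.prod B) C
  | andI {A B C : Fm} : Prov A B → Prov A C → Prov A (B.and C)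
  | orE {A B C : Fm} : Prov A C → Prov B C → Prov (A.or B) C
  | cut {A B C : Fm} : Prov A B → Prov B C → Prov A C
  | ildivMono {A B C D : Fm} : Prov A B → Prov C D → Prov (B.ildiv C) (A.ildiv D)
  | irdivMono {A B C D : Fm} : Prov A B → Prov C D → Prov (C.irdiv B) (D.irdiv A)
  | ildivInd {A B : Fm} : Prov A (B.ldiv A) → Prov A (B.ildiv A)
  | irdivInd {A B : Fm} : Prov A (A.rdiv B) → Prov A (A.irdiv B)

/-- Conjunction of a finite list of formulas (⋀∅ = ⊤). -/
def bigAnd : List Fm → Fm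
  | [] => .top
  | A :: As => A.and (bigAnd As)

/-- Disjunction of a finite list of formulas (⋁∅ = ⊥). -/
def bigOr : List Fm → Fm
  | [] => .bot
  | A :: As => A.or (bigOr As)

/-- An independent IDFNL-pair: no finite Γ′ ⊆ Γ, Δ′ ⊆ Δ with ⋀Γ′ ⟶ ⋁Δ′. -/
def IndepPair (Γ Δ : Set Fm) : Prop :=
  ¬ ∃ (γ δ : List Fm), (∀ A ∈ γ, A ∈ Γ) ∧ (∀ A ∈ δ, A ∈ Δ) ∧ Prov (bigAnd γ) (bigOr δ)

/-- A prime IDFNL-theory. -/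
def PrimeTheory (T : Set Fm) : Prop :=
  (∀ A B, A ∈ T → B ∈ T → A.and B ∈ T) ∧
  (∀ A B, A ∈ T → Prov A B → B ∈ T) ∧
  (∀ A B, A.or B ∈ T → A ∈ T ∨ B ∈ T)

/-- Membership in the closure of a set of formulas Φ′: the smallest set
containing Φ′, ⊤, ⊥, closed under subformulas, and such that
A∖∖B ∈ Φ implies A∖B ∈ Φ and B//A ∈ Φ implies B/A ∈ Φ. -/
inductive Closure (Φ : Set Fm) : Fm → Prop
  | base {A : Fm} : A ∈ Φ → Closure Φ A
  | top : Closure Φ .top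
  | bot : Closure Φ .bot
  | andL {A B : Fm} : Closure Φ (A.and B) → Closure Φ A
  | andR {A B : Fm} : Closure Φ (A.and B) → Closure Φ B
  | orL {A B : Fm} : Closure Φ (A.or B) → Closure Φ A
  | orR {A B : Fm} : Closure Φ (A.or B) → Closure Φ B
  | prodL {A B : Fm} : Closure Φ (A.prod B) → Closure Φ A
  | prodR {A B : Fm} : Closure Φ (A.prod B) → Closure Φ B
  | ldivL {A B : Fm} : Closure Φ (A.ldiv B) → Closure Φ A
  | ldivR {A B : Fm} : Closure Φ (A.ldiv B) → Closure Φ B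
  | rdivL {A B : Fm} : Closure Φ (A.rdiv B) → Closure Φ A
  | rdivR {A B : Fm} : Closure Φ (A.rdiv B) → Closure Φ B
  | ildivL {A B : Fm} : Closure Φ (A.ildiv B) → Closure Φ A
  | ildivR {A B : Fm} : Closure Φ (A.ildiv B) → Closure Φ B
  | irdivL {A B : Fm} : Closure Φ (A.irdiv B) → Closure Φ A
  | irdivR {A B : Fm} : Closure Φ (A.irdiv B) → Closure Φ B
  | ildivDiv {A B : Fm} : Closure Φ (A.ildiv B) → Closure Φ (A.ldiv B)
  | irdivDiv {A B : Fm} : Closure Φ (B.irdiv A) → Closure Φ (B.rdiv A)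

/-- A set of formulas is closed iff it equals its own closure. -/
def ClosedSet (Φ : Set Fm) : Prop := {A | Closure Φ A} = Φ

/-- `entails Γ A`: ⋀Γ′ ⟶ A for some finite Γ′ ⊆ Γ. -/
def entails (Γ : Set Fm) (A : Fm) : Prop :=
  ∃ γ : List Fm, (∀ X ∈ γ, X ∈ Γ) ∧ Prov (bigAnd γ) A

/-- States of the canonical model over a (finite closed) set Φ:
independent IDFNL-pairs (a_in, a_out) with a_in ∪ a_out = Φ. -/
def CanState (Φ : Set Fm) : Type :=
  {a : Set Fm × Set Fm // IndepPair a.1 a.2 ∧ a.1 ∪ a.2 = Φ}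

/-- The canonical accessibility relation. -/
def canR (Φ : Set Fm) (a b c : CanState Φ) : Prop :=
  ∀ A B : Fm, A ∈ Φ → B ∈ Φ → entails a.1.1 A → entails b.1.1 (A.ldiv B) → entails c.1.1 B

/-- The canonical model M_Φ. -/
def canModel (Φ : Set Fm) : DosenModel (CanState Φ) :=
  ⟨canR Φ, fun p => {a | Fm.var p ∈ Φ ∧ Fm.var p ∈ a.1.1}⟩

/-!
Suppose `A ⊬ B` and let `Φ` be the closure of `{A, B}`, a finite set. The canonical model over
`Φ` has as states the partitions of `Φ` into independent pairs. Lindenbaum's lemma relative to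
`Φ` (a subset of `Φ` avoiding an ideal of the Lindenbaum algebra extends to a maximal one) gives
a state containing `A` but not `B`, and supplies the witnesses for the truth lemma at `•`, `∖`
and `/`. For `A∖∖B`, the states satisfying it are described by a single formula `D`, since their
theories are finite; then `D ⊢ A∖(B ∧ D)`, and the induction rule gives `D ⊢ A∖∖B`. Dually
for `//`. By the truth lemma, that first state satisfies `A` but not `B`.
-/

namespace Prov

theorem and_mono {A A' B B' : Fm} (h₁ : Prov A A') (h₂ : Prov B B') :
    Prov (A.and B) (A'.and B') :=
  andI ((andE1 A B).cut h₁) ((andE2 A B).cut h₂)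

theorem or_mono {A A' B B' : Fm} (h₁ : Prov A A') (h₂ : Prov B B') :
    Prov (A.or B) (A'.or B') :=
  orE (h₁.cut (orI1 A' B')) (h₂.cut (orI2 A' B'))

theorem prod_mono {A A' B B' : Fm} (h₁ : Prov A A') (h₂ : Prov B B') :
    Prov (A.prod B) (A'.prod B') :=
  resL2 (h₂.cut (resL1 (resR2 (h₁.cut (resR1 (id (A'.prod B')))))))

theorem ldiv_mono {A A' B B' : Fm} (h₁ : Prov A' A) (h₂ : Prov B B') :
    Prov (A.ldiv B) (A'.ldiv B') :=
  resL1 (((prod_mono h₁ (id _)).cut (resL2 (id (A.ldiv B)))).cut h₂)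

theorem rdiv_mono {A A' B B' : Fm} (h₁ : Prov B B') (h₂ : Prov A' A) :
    Prov (B.rdiv A) (B'.rdiv A') :=
  resR1 (((prod_mono (id _) h₂).cut (resR2 (id (B.rdiv A)))).cut h₁)

theorem ldiv_and (A B C : Fm) : Prov ((A.ldiv B).and (A.ldiv C)) (A.ldiv (B.and C)) :=
  resL1 (andI (resL2 (andE1 _ _)) (resL2 (andE2 _ _)))

theorem rdiv_and (A B C : Fm) : Prov ((B.rdiv A).and (C.rdiv A)) ((B.and C).rdiv A) :=
  resR1 (andI (resR2 (andE1 _ _)) (resR2 (andE2 _ _)))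

theorem or_prod (A B C : Fm) : Prov ((A.or B).prod C) ((A.prod C).or (B.prod C)) :=
  resR2 (orE (resR1 (orI1 _ _)) (resR1 (orI2 _ _)))

theorem prod_or (A B C : Fm) : Prov (C.prod (A.or B)) ((C.prod A).or (C.prod B)) :=
  resL2 (orE (resL1 (orI1 _ _)) (resL1 (orI2 _ _)))

theorem ldiv_or_ldiv (A B C D : Fm) :
    Prov ((A.ldiv B).and (C.ldiv D)) ((A.or C).ldiv (B.or D)) :=
  resL1 ((or_prod _ _ _).cut
    (or_mono ((andE1 _ _).resL2) ((andE2 _ _).resL2)))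

theorem rdiv_or_rdiv (A B C D : Fm) :
    Prov ((B.rdiv A).and (D.rdiv C)) ((B.or D).rdiv (A.or C)) :=
  resR1 ((prod_or _ _ _).cut
    (or_mono ((andE1 _ _).resR2) ((andE2 _ _).resR2)))

theorem bot_prod (A : Fm) : Prov (Fm.bot.prod A) .bot := resR2 (bot _)

theorem prod_bot (A : Fm) : Prov (A.prod .bot) .bot := resL2 (bot _)

theorem ldiv_top (A C : Fm) : Prov C (A.ldiv .top) := resL1 (top _)

theorem rdiv_top (A C : Fm) : Prov C (Fm.top.rdiv A) := resR1 (top _)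

theorem bot_ldiv (C D : Fm) : Prov C (Fm.bot.ldiv D) := resL1 ((bot_prod C).cut (bot D))

theorem rdiv_bot (C D : Fm) : Prov C (D.rdiv .bot) := resR1 ((prod_bot C).cut (bot D))

theorem and_or_and {A B C D : Fm} :
    Prov ((A.and B).and (C.or D)) ((A.and C).or (B.and D)) :=
  (distrib _ _ _).cut (or_mono (and_mono (andE1 _ _) (id _)) (and_mono (andE2 _ _) (id _)))

theorem and_and_rotate (C D G : Fm) : Prov ((C.and D).and G) (C.and (G.and D)) :=
  andI ((andE1 _ _).cut (andE1 _ _)) (andI (andE2 _ _) ((andE1 _ _).cut (andE2 _ _)))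

theorem bigAnd_of_mem {γ : List Fm} {A : Fm} (h : A ∈ γ) : Prov (bigAnd γ) A := by
  induction γ with
  | nil => cases h
  | cons B γ ih =>
    rcases List.mem_cons.1 h with rfl | h
    · exact andE1 _ _
    · exact (andE2 _ _).cut (ih h)

theorem bigAnd_of_forall {C : Fm} {γ : List Fm} (h : ∀ A ∈ γ, Prov C A) :
    Prov C (bigAnd γ) := by
  induction γ with
  | nil => exact top C
  | cons B γ ih => exact andI (h B (by simp)) (ih fun A hA => h A (by simp [hA]))

theorem bigAnd_of_subset {γ γ' : List Fm} (h : γ' ⊆ γ) : Prov (bigAnd γ) (bigAnd γ') :=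
  bigAnd_of_forall fun _ hA => bigAnd_of_mem (h hA)

theorem of_mem_bigOr {δ : List Fm} {A : Fm} (h : A ∈ δ) : Prov A (bigOr δ) := by
  induction δ with
  | nil => cases h
  | cons B δ ih =>
    rcases List.mem_cons.1 h with rfl | h
    · exact orI1 _ _
    · exact (ih h).cut (orI2 _ _)

theorem bigOr_of_forall {C : Fm} {δ : List Fm} (h : ∀ A ∈ δ, Prov A C) :
    Prov (bigOr δ) C := by
  induction δ with
  | nil => exact bot C
  | cons B δ ih => exact orE (h B (by simp)) (ih fun A hA => h A (by simp [hA]))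

theorem or_bigOr_append (δ δ' : List Fm) : Prov ((bigOr δ).or (bigOr δ')) (bigOr (δ ++ δ')) :=
  orE (bigOr_of_forall fun _ hA => of_mem_bigOr (List.mem_append_left _ hA))
    (bigOr_of_forall fun _ hA => of_mem_bigOr (List.mem_append_right _ hA))

theorem ildiv_of_ldiv_and {A B D : Fm} (h : Prov D (A.ldiv (B.and D))) : Prov D (A.ildiv B) := by
  have hBD : Prov (B.and D) (A.ildiv B) :=
    (ildivInd ((andE2 _ _).cut h)).cut (ildivMono (id A) (andE1 _ _))
  exact (andI (h.cut (ldiv_mono (id A) (andE1 _ _))) (h.cut (ldiv_mono (id A) hBD))).cut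
    (ildivFold A B)

theorem irdiv_of_rdiv_and {A B D : Fm} (h : Prov D ((B.and D).rdiv A)) : Prov D (B.irdiv A) := by
  have hBD : Prov (B.and D) (B.irdiv A) :=
    (irdivInd ((andE2 _ _).cut h)).cut (irdivMono (id A) (andE1 _ _))
  exact (andI (h.cut (rdiv_mono hBD (id A))) (h.cut (rdiv_mono (andE1 _ _) (id A)))).cut
    (irdivFold A B)

theorem ildiv_ldiv (A B : Fm) : Prov (A.ildiv B) (A.ldiv B) := (ildivUnfold A B).cut (andE1 _ _)

theorem ildiv_ldiv_ildiv (A B : Fm) : Prov (A.ildiv B) (A.ldiv (A.ildiv B)) :=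
  (ildivUnfold A B).cut (andE2 _ _)

theorem ldiv_of_rdiv {A B C : Fm} (h : Prov C (B.rdiv A)) : Prov A (C.ldiv B) := resL1 (resR2 h)

theorem ldiv_irdiv (A B : Fm) : Prov A ((B.irdiv A).ldiv B) :=
  ldiv_of_rdiv ((irdivUnfold A B).cut (andE1 _ _))

theorem ldiv_irdiv_irdiv (A B : Fm) : Prov A ((B.irdiv A).ldiv (B.irdiv A)) :=
  ldiv_of_rdiv ((irdivUnfold A B).cut (andE2 _ _))

end Prov

section Entails

variable {Γ : Set Fm} {A B : Fm}

theorem entails_of_mem (h : A ∈ Γ) : entails Γ A :=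
  ⟨[A], by simpa using h, Prov.andE1 _ _⟩

theorem entails_top : entails Γ .top := ⟨[], by simp, Prov.id _⟩

theorem entails.cut (h : entails Γ A) (p : Prov A B) : entails Γ B :=
  let ⟨γ, hγ, hp⟩ := h
  ⟨γ, hγ, hp.cut p⟩

theorem entails.and (h₁ : entails Γ A) (h₂ : entails Γ B) : entails Γ (A.and B) := by
  obtain ⟨γ₁, hγ₁, p₁⟩ := h₁
  obtain ⟨γ₂, hγ₂, p₂⟩ := h₂
  refine ⟨γ₁ ++ γ₂, by simpa [or_imp, forall_and] using And.intro hγ₁ hγ₂,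
    Prov.andI ?_ ?_⟩
  · exact (Prov.bigAnd_of_subset (List.subset_append_left _ _)).cut p₁
  · exact (Prov.bigAnd_of_subset (List.subset_append_right _ _)).cut p₂

theorem entails_empty : entails ∅ A ↔ Prov .top A := by
  refine ⟨fun ⟨γ, hγ, hp⟩ => ?_, fun h => ⟨[], by simp, h⟩⟩
  obtain rfl : γ = [] := List.eq_nil_iff_forall_not_mem.2 hγ
  exact hp

theorem entails_singleton : entails {A} B ↔ Prov A B := by
  refine ⟨fun ⟨γ, hγ, hp⟩ => ?_, fun h => (entails_of_mem (Set.mem_singleton A)).cut h⟩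
  exact (Prov.bigAnd_of_forall fun C hC => (hγ C hC : C = A) ▸ Prov.id A).cut hp

theorem entails_insert {q : Fm} (h : entails (insert q Γ) A) :
    ∃ G, entails Γ G ∧ Prov (G.and q) A := by
  classical
  obtain ⟨γ, hγ, hp⟩ := h
  refine ⟨bigAnd (γ.filter (· ∈ Γ)),
    ⟨_, fun C hC => by simpa using (List.mem_filter.1 hC).2, Prov.id _⟩,
    (Prov.bigAnd_of_forall fun C hC => ?_).cut hp⟩
  by_cases hCΓ : C ∈ Γ
  · exact (Prov.andE1 _ _).cut
      (Prov.bigAnd_of_mem (List.mem_filter.2 ⟨hC, by simpa using hCΓ⟩))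
  · obtain rfl : C = q := (hγ C hC).resolve_right hCΓ
    exact Prov.andE2 _ _

end Entails

/-- An ideal of the Lindenbaum algebra of IDFNL. -/
structure IsProvIdeal (I : Set Fm) : Prop where
  mem_of_prov {G G' : Fm} : Prov G G' → G' ∈ I → G ∈ I
  bot_mem : Fm.bot ∈ I
  or_mem {G G' : Fm} : G ∈ I → G' ∈ I → G.or G' ∈ I

def Avoids (I T : Set Fm) : Prop := ∀ G, entails T G → G ∉ I

def Saturated (Φ I T : Set Fm) : Prop :=
  ∀ q ∈ Φ, q ∉ T → ∃ G, entails T G ∧ G.and q ∈ I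

section Lindenbaum

variable {Φ I T : Set Fm}

theorem Saturated.exists_and_bigOr_mem (hI : IsProvIdeal I) (hT : Saturated Φ I T)
    {δ : List Fm} (hδ : ∀ d ∈ δ, d ∈ Φ ∧ d ∉ T) :
    ∃ G, entails T G ∧ G.and (bigOr δ) ∈ I := by
  induction δ with
  | nil => exact ⟨.top, entails_top, hI.mem_of_prov (Prov.andE2 _ _) hI.bot_mem⟩
  | cons d δ ih =>
    obtain ⟨G₁, hG₁, hd⟩ := hT d (hδ d (by simp)).1 (hδ d (by simp)).2
    obtain ⟨G₂, hG₂, hδ'⟩ := ih fun d' hd' => hδ d' (by simp [hd'])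
    exact ⟨G₁.and G₂, hG₁.and hG₂, hI.mem_of_prov Prov.and_or_and (hI.or_mem hd hδ')⟩

theorem Saturated.exists_mem_of_entails_bigOr (hI : IsProvIdeal I) (hT : Saturated Φ I T)
    (hav : Avoids I T) {δ : List Fm} (hδ : ∀ d ∈ δ, d ∈ Φ) (h : entails T (bigOr δ)) :
    ∃ d ∈ δ, d ∈ T := by
  by_contra! hnot
  obtain ⟨G, hG, hGδ⟩ := hT.exists_and_bigOr_mem hI fun d hd => ⟨hδ d hd, hnot d hd⟩
  exact hav _ (hG.and h) hGδ

/-- Lindenbaum's lemma, relativised to a finite set of formulas `Φ`. -/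
theorem exists_saturated (hfin : Φ.Finite) (hI : IsProvIdeal I) {S : Set Fm} (hSΦ : S ⊆ Φ)
    (hS : Avoids I S) : ∃ T, S ⊆ T ∧ T ⊆ Φ ∧ Avoids I T ∧ Saturated Φ I T := by
  have hfin' : {T | S ⊆ T ∧ T ⊆ Φ ∧ Avoids I T}.Finite :=
    hfin.finite_subsets.subset fun T hT => hT.2.1
  obtain ⟨T, hST, hmax⟩ := hfin'.exists_le_maximal ⟨le_rfl, hSΦ, hS⟩
  obtain ⟨-, hTΦ, hT⟩ := hmax.prop
  refine ⟨T, hST, hTΦ, hT, fun q hq hqT => ?_⟩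
  have hins : ¬ Avoids I (insert q T) := fun h =>
    hqT (hmax.mem_of_prop_insert
      ⟨hST.trans (Set.subset_insert q T), Set.insert_subset hq hTΦ, h⟩)
  simp only [Avoids, not_forall, not_not] at hins
  obtain ⟨G, hG, hGI⟩ := hins
  obtain ⟨G', hG', hp⟩ := entails_insert hG
  exact ⟨G', hG', hI.mem_of_prov hp hGI⟩

end Lindenbaum

namespace CanState

variable {Φ : Set Fm} (a : CanState Φ)

theorem subset : a.1.1 ⊆ Φ :=
  a.2.2.subset.trans' Set.subset_union_left

theorem exists_mem_of_entails_bigOr {δ : List Fm} (hδ : ∀ d ∈ δ, d ∈ Φ)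
    (h : entails a.1.1 (bigOr δ)) : ∃ d ∈ δ, d ∈ a.1.1 := by
  by_contra! hnot
  obtain ⟨γ, hγ, hp⟩ := h
  refine a.2.1 ⟨γ, δ, hγ, fun d hd => ?_, hp⟩
  exact (a.2.2.symm.subset (hδ d hd)).resolve_left (hnot d hd)

theorem mem_of_entails {A : Fm} (hA : A ∈ Φ) (h : entails a.1.1 A) : A ∈ a.1.1 := by
  simpa using a.exists_mem_of_entails_bigOr (δ := [A]) (by simpa using hA) (h.cut (Prov.orI1 _ _))

theorem bot_not_mem : Fm.bot ∉ a.1.1 := fun h =>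
  a.2.1 ⟨[.bot], [], by simpa using h, by simp, Prov.andE1 _ _⟩

end CanState

theorem canR.mem {Φ : Set Fm} {a b c : CanState Φ} (hR : canR Φ a b c) {P Q : Fm}
    (hP : P ∈ Φ) (hQ : Q ∈ Φ) (ha : entails a.1.1 P) (hb : entails b.1.1 (P.ldiv Q)) :
    Q ∈ c.1.1 :=
  c.mem_of_entails hQ (hR P Q hP hQ ha hb)

theorem exists_canState {Φ I S : Set Fm} (hfin : Φ.Finite) (hI : IsProvIdeal I) (hSΦ : S ⊆ Φ)
    (hS : Avoids I S) :
    ∃ a : CanState Φ, S ⊆ a.1.1 ∧ Avoids I a.1.1 ∧ Saturated Φ I a.1.1 := by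
  obtain ⟨T, hST, hTΦ, hT, hsat⟩ := exists_saturated hfin hI hSΦ hS
  refine ⟨⟨(T, Φ \ T), ?_, Set.union_sdiff_cancel hTΦ⟩, hST, hT, hsat⟩
  rintro ⟨γ, δ, hγ, hδ, hp⟩
  obtain ⟨d, hd, hdT⟩ :=
    hsat.exists_mem_of_entails_bigOr hI hT (fun d hd => (hδ d hd).1) ⟨γ, hγ, hp⟩
  exact (hδ d hd).2 hdT

section Ideals

variable (Γ Δ : Set Fm)

theorem isProvIdeal_ldiv (A F : Fm) :
    IsProvIdeal {G | ∃ C : Fm, entails Γ (A.ldiv C) ∧ Prov (C.and G) F} where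
  mem_of_prov := fun hp ⟨C, hC, hCF⟩ => ⟨C, hC, (Prov.and_mono (.id C) hp).cut hCF⟩
  bot_mem := ⟨.top, entails_top.cut (Prov.ldiv_top A _), (Prov.andE2 _ _).cut (.bot F)⟩
  or_mem := fun ⟨C₁, hC₁, h₁⟩ ⟨C₂, hC₂, h₂⟩ =>
    ⟨C₁.and C₂, (hC₁.and hC₂).cut (Prov.ldiv_and _ _ _),
      Prov.and_or_and.cut (.orE h₁ h₂)⟩

theorem isProvIdeal_rdiv (A F : Fm) :
    IsProvIdeal {G | ∃ C : Fm, entails Γ (C.rdiv A) ∧ Prov (C.and G) F} where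
  mem_of_prov := fun hp ⟨C, hC, hCF⟩ => ⟨C, hC, (Prov.and_mono (.id C) hp).cut hCF⟩
  bot_mem := ⟨.top, entails_top.cut (Prov.rdiv_top A _), (Prov.andE2 _ _).cut (.bot F)⟩
  or_mem := fun ⟨C₁, hC₁, h₁⟩ ⟨C₂, hC₂, h₂⟩ =>
    ⟨C₁.and C₂, (hC₁.and hC₂).cut (Prov.rdiv_and _ _ _),
      Prov.and_or_and.cut (.orE h₁ h₂)⟩

theorem isProvIdeal_ldiv_bigOr :
    IsProvIdeal {G | ∃ δ, (∀ d ∈ δ, d ∈ Δ) ∧ entails Γ (G.ldiv (bigOr δ))} where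
  mem_of_prov := fun hp ⟨δ, hδ, h⟩ => ⟨δ, hδ, h.cut (Prov.ldiv_mono hp (.id _))⟩
  bot_mem := ⟨[], by simp, entails_top.cut (Prov.bot_ldiv _ _)⟩
  or_mem := fun ⟨δ₁, hδ₁, h₁⟩ ⟨δ₂, hδ₂, h₂⟩ =>
    ⟨δ₁ ++ δ₂, by simpa [or_imp, forall_and] using And.intro hδ₁ hδ₂,
      (h₁.and h₂).cut ((Prov.ldiv_or_ldiv _ _ _ _).cut
        (Prov.ldiv_mono (.id _) (Prov.or_bigOr_append δ₁ δ₂)))⟩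

theorem isProvIdeal_rdiv_bigOr :
    IsProvIdeal {G | ∃ δ, (∀ d ∈ δ, d ∈ Δ) ∧ entails Γ ((bigOr δ).rdiv G)} where
  mem_of_prov := fun hp ⟨δ, hδ, h⟩ => ⟨δ, hδ, h.cut (Prov.rdiv_mono (.id _) hp)⟩
  bot_mem := ⟨[], by simp, entails_top.cut (Prov.rdiv_bot _ _)⟩
  or_mem := fun ⟨δ₁, hδ₁, h₁⟩ ⟨δ₂, hδ₂, h₂⟩ =>
    ⟨δ₁ ++ δ₂, by simpa [or_imp, forall_and] using And.intro hδ₁ hδ₂,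
      (h₁.and h₂).cut ((Prov.rdiv_or_rdiv _ _ _ _).cut
        (Prov.rdiv_mono (Prov.or_bigOr_append δ₁ δ₂) (.id _)))⟩

theorem isProvIdeal_prod_left (Y : Fm) :
    IsProvIdeal {G | ∃ δ, (∀ d ∈ δ, d ∈ Δ) ∧ Prov (G.prod Y) (bigOr δ)} where
  mem_of_prov := fun hp ⟨δ, hδ, h⟩ => ⟨δ, hδ, (Prov.prod_mono hp (.id Y)).cut h⟩
  bot_mem := ⟨[], by simp, Prov.bot_prod Y⟩
  or_mem := fun ⟨δ₁, hδ₁, h₁⟩ ⟨δ₂, hδ₂, h₂⟩ =>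
    ⟨δ₁ ++ δ₂, by simpa [or_imp, forall_and] using And.intro hδ₁ hδ₂,
      (Prov.or_prod _ _ _).cut ((Prov.or_mono h₁ h₂).cut (Prov.or_bigOr_append δ₁ δ₂))⟩

theorem isProvIdeal_prod_right :
    IsProvIdeal
      {G | ∃ X, entails Γ X ∧ ∃ δ, (∀ d ∈ δ, d ∈ Δ) ∧ Prov (X.prod G) (bigOr δ)} where
  mem_of_prov := fun hp ⟨X, hX, δ, hδ, h⟩ =>
    ⟨X, hX, δ, hδ, (Prov.prod_mono (.id X) hp).cut h⟩
  bot_mem := ⟨.top, entails_top, [], by simp, Prov.prod_bot _⟩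
  or_mem := fun ⟨X₁, hX₁, δ₁, hδ₁, h₁⟩ ⟨X₂, hX₂, δ₂, hδ₂, h₂⟩ =>
    ⟨X₁.and X₂, hX₁.and hX₂, δ₁ ++ δ₂,
      by simpa [or_imp, forall_and] using And.intro hδ₁ hδ₂,
      (Prov.prod_or _ _ _).cut ((Prov.or_mono
        ((Prov.prod_mono (.andE1 _ _) (.id _)).cut h₁)
        ((Prov.prod_mono (.andE2 _ _) (.id _)).cut h₂)).cut (Prov.or_bigOr_append δ₁ δ₂))⟩

end Ideals

section Existence

variable {Φ : Set Fm}

theorem exists_canState_of_not_entails_ldiv (hfin : Φ.Finite) (a : CanState Φ) {A F : Fm}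
    (hnot : ¬ entails a.1.1 (A.ldiv F)) :
    ∃ c : CanState Φ, ¬ entails c.1.1 F ∧ ∀ δ, (∀ d ∈ δ, d ∈ Φ) →
      entails a.1.1 (A.ldiv (bigOr δ)) → ∃ d ∈ δ, d ∈ c.1.1 := by
  have hI := isProvIdeal_ldiv a.1.1 A F
  obtain ⟨c, -, hc, hsat⟩ := exists_canState hfin hI (Set.empty_subset Φ) <| by
    rintro G hG ⟨C, hC, hp⟩
    exact hnot (hC.cut (Prov.ldiv_mono (.id A) ((Prov.andI (.id C)
      ((Prov.top C).cut (entails_empty.1 hG))).cut hp)))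
  refine ⟨c, fun hF => hc F hF ⟨.top, entails_top.cut (Prov.ldiv_top A _), .andE2 _ _⟩,
    fun δ hδ haδ => ?_⟩
  by_contra! hδc
  obtain ⟨G, hG, C, hC, hp⟩ :=
    hsat.exists_and_bigOr_mem hI fun d hd => ⟨hδ d hd, hδc d hd⟩
  exact hc G hG ⟨C.and (bigOr δ), (hC.and haδ).cut (Prov.ldiv_and _ _ _),
    (Prov.and_and_rotate _ _ _).cut hp⟩

theorem exists_canR_left (hfin : Φ.Finite) (a : CanState Φ) {A : Fm} (hA : A ∈ Φ)
    {c : CanState Φ} (hc : ∀ δ, (∀ d ∈ δ, d ∈ Φ) →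
      entails a.1.1 (A.ldiv (bigOr δ)) → ∃ d ∈ δ, d ∈ c.1.1) :
    ∃ b : CanState Φ, canR Φ b a c ∧ A ∈ b.1.1 := by
  obtain ⟨b, hAb, hb, -⟩ := exists_canState hfin (isProvIdeal_ldiv_bigOr a.1.1 (Φ \ c.1.1))
    (Set.singleton_subset_iff.2 hA) <| by
      rintro G hG ⟨δ, hδ, haδ⟩
      obtain ⟨d, hd, hdc⟩ := hc δ (fun d hd => (hδ d hd).1)
        (haδ.cut (Prov.ldiv_mono (entails_singleton.1 hG) (.id _)))
      exact (hδ d hd).2 hdc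
  refine ⟨b, fun P Q hP hQ hbP haPQ => entails_of_mem ?_, hAb rfl⟩
  by_contra hQc
  exact hb P hbP
    ⟨[Q], by simpa using ⟨hQ, hQc⟩, haPQ.cut (Prov.ldiv_mono (.id P) (.orI1 _ _))⟩

theorem entails_ldiv_of_forall_canR (hfin : Φ.Finite) (a : CanState Φ) {A F : Fm} (hA : A ∈ Φ)
    (h : ∀ b c, canR Φ b a c → A ∈ b.1.1 → entails c.1.1 F) :
    entails a.1.1 (A.ldiv F) := by
  by_contra hnot
  obtain ⟨c, hcF, hc⟩ := exists_canState_of_not_entails_ldiv hfin a hnot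
  obtain ⟨b, hR, hAb⟩ := exists_canR_left hfin a hA hc
  exact hcF (h b c hR hAb)

theorem exists_canState_of_not_entails_rdiv (hfin : Φ.Finite) (a : CanState Φ) {A F : Fm}
    (hnot : ¬ entails a.1.1 (F.rdiv A)) :
    ∃ u : CanState Φ, ¬ entails u.1.1 F ∧ ∀ δ, (∀ d ∈ δ, d ∈ Φ) →
      entails a.1.1 ((bigOr δ).rdiv A) → ∃ d ∈ δ, d ∈ u.1.1 := by
  have hI := isProvIdeal_rdiv a.1.1 A F
  obtain ⟨u, -, hu, hsat⟩ := exists_canState hfin hI (Set.empty_subset Φ) <| by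
    rintro G hG ⟨C, hC, hp⟩
    exact hnot (hC.cut (Prov.rdiv_mono ((Prov.andI (.id C)
      ((Prov.top C).cut (entails_empty.1 hG))).cut hp) (.id A)))
  refine ⟨u, fun hF => hu F hF ⟨.top, entails_top.cut (Prov.rdiv_top A _), .andE2 _ _⟩,
    fun δ hδ haδ => ?_⟩
  by_contra! hδu
  obtain ⟨G, hG, C, hC, hp⟩ :=
    hsat.exists_and_bigOr_mem hI fun d hd => ⟨hδ d hd, hδu d hd⟩
  exact hu G hG ⟨C.and (bigOr δ), (hC.and haδ).cut (Prov.rdiv_and _ _ _),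
    (Prov.and_and_rotate _ _ _).cut hp⟩

theorem exists_canR_right (hfin : Φ.Finite) (a : CanState Φ) {A : Fm} (hA : A ∈ Φ)
    {u : CanState Φ} (hu : ∀ δ, (∀ d ∈ δ, d ∈ Φ) →
      entails a.1.1 ((bigOr δ).rdiv A) → ∃ d ∈ δ, d ∈ u.1.1) :
    ∃ t : CanState Φ, canR Φ a t u ∧ A ∈ t.1.1 := by
  obtain ⟨t, hAt, ht, -⟩ := exists_canState hfin (isProvIdeal_rdiv_bigOr a.1.1 (Φ \ u.1.1))
    (Set.singleton_subset_iff.2 hA) <| by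
      rintro G hG ⟨δ, hδ, haδ⟩
      obtain ⟨d, hd, hdu⟩ := hu δ (fun d hd => (hδ d hd).1)
        (haδ.cut (Prov.rdiv_mono (.id _) (entails_singleton.1 hG)))
      exact (hδ d hd).2 hdu
  refine ⟨t, fun P Q hP hQ haP htPQ => entails_of_mem ?_, hAt rfl⟩
  by_contra hQu
  exact ht _ htPQ ⟨[Q], by simpa using ⟨hQ, hQu⟩,
    haP.cut ((Prov.resR1 (Prov.resL2 (.id _))).cut (Prov.rdiv_mono (.orI1 _ _) (.id _)))⟩

theorem entails_rdiv_of_forall_canR (hfin : Φ.Finite) (a : CanState Φ) {A F : Fm} (hA : A ∈ Φ)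
    (h : ∀ t u, canR Φ a t u → A ∈ t.1.1 → entails u.1.1 F) :
    entails a.1.1 (F.rdiv A) := by
  by_contra hnot
  obtain ⟨u, huF, hu⟩ := exists_canState_of_not_entails_rdiv hfin a hnot
  obtain ⟨t, hR, hAt⟩ := exists_canR_right hfin a hA hu
  exact huF (h t u hR hAt)

theorem exists_canR_of_prod_mem (hfin : Φ.Finite) (a : CanState Φ) {X Y : Fm} (hX : X ∈ Φ)
    (hY : Y ∈ Φ) (h : X.prod Y ∈ a.1.1) :
    ∃ t u : CanState Φ, canR Φ t u a ∧ X ∈ t.1.1 ∧ Y ∈ u.1.1 := by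
  obtain ⟨t, hXt, ht, -⟩ := exists_canState hfin (isProvIdeal_prod_left (Φ \ a.1.1) Y)
    (Set.singleton_subset_iff.2 hX) <| by
      rintro G hG ⟨δ, hδ, hp⟩
      obtain ⟨d, hd, hda⟩ := a.exists_mem_of_entails_bigOr (fun d hd => (hδ d hd).1)
        ((entails_of_mem h).cut ((Prov.prod_mono (entails_singleton.1 hG) (.id Y)).cut hp))
      exact (hδ d hd).2 hda
  obtain ⟨u, hYu, hu, -⟩ := exists_canState hfin (isProvIdeal_prod_right t.1.1 (Φ \ a.1.1))
    (Set.singleton_subset_iff.2 hY) <| by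
      rintro G hG ⟨X', hX', δ, hδ, hp⟩
      exact ht X' hX' ⟨δ, hδ, (Prov.prod_mono (.id X') (entails_singleton.1 hG)).cut hp⟩
  refine ⟨t, u, fun P Q hP hQ htP huPQ => entails_of_mem ?_, hXt rfl, hYu rfl⟩
  by_contra hQa
  exact hu _ huPQ ⟨P, htP, [Q], by simpa using ⟨hQ, hQa⟩,
    (Prov.resL2 (.id _)).cut (.orI1 _ _)⟩

end Existence

section Semantics

variable {S : Type*} {M : DosenModel S} {A B : Fm} {s x t : S}

theorem sat_ildiv_of_R (hs : sat M (A.ildiv B) s) (hR : M.R x s t) (hx : sat M A x) :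
    sat M B t ∧ sat M (A.ildiv B) t := by
  refine ⟨hs [x] t (by simp) hR (by simpa using hx), fun ys u hys hRys hA => ?_⟩
  obtain ⟨y, ys, rfl⟩ := List.exists_cons_of_ne_nil hys
  exact hs (x :: y :: ys) u (by simp) ⟨t, hR, hRys⟩ (by simpa [hx] using hA)

theorem sat_irdiv_of_R (hs : sat M (B.irdiv A) s) (hR : M.R s x t) (hx : sat M A x) :
    sat M B t ∧ sat M (B.irdiv A) t := by
  refine ⟨hs [x] t (by simp) hR (by simpa using hx), fun ys u hys hRys hA => ?_⟩
  obtain ⟨y, ys, rfl⟩ := List.exists_cons_of_ne_nil hys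
  exact hs (x :: y :: ys) u (by simp) ⟨t, hR, hRys⟩ (by simpa [hx] using hA)

end Semantics

section Truth

variable {Φ : Set Fm}

theorem ClosedSet.mem (hcl : ClosedSet Φ) {C : Fm} (h : Closure Φ C) : C ∈ Φ := hcl.subset h

theorem mem_of_ildiv_mem_of_Rleft {A B : Fm} (hA : A ∈ Φ) (hB : B ∈ Φ)
    (hAB : A.ildiv B ∈ Φ) :
    ∀ (xs : List (CanState Φ)) (s t : CanState Φ), A.ildiv B ∈ s.1.1 →
      Rleft (canR Φ) xs s t → (∀ x ∈ xs, A ∈ x.1.1) → B ∈ t.1.1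
  | [], _, _, _, hR, _ => hR.elim
  | [x], _, _, hs, hR, hx => hR.mem hA hB (entails_of_mem (hx x (by simp)))
      ((entails_of_mem hs).cut (Prov.ildiv_ldiv A B))
  | x :: y :: xs, _, t, hs, ⟨z, hR, hRz⟩, hx =>
      mem_of_ildiv_mem_of_Rleft hA hB hAB (y :: xs) z t
        (hR.mem hA hAB (entails_of_mem (hx x (by simp)))
          ((entails_of_mem hs).cut (Prov.ildiv_ldiv_ildiv A B)))
        hRz fun w hw => hx w (List.mem_cons_of_mem x hw)

theorem mem_of_irdiv_mem_of_Rright {A B : Fm} (hA : A ∈ Φ) (hB : B ∈ Φ)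
    (hAB : B.irdiv A ∈ Φ) :
    ∀ (xs : List (CanState Φ)) (s t : CanState Φ), B.irdiv A ∈ s.1.1 →
      Rright (canR Φ) s xs t → (∀ x ∈ xs, A ∈ x.1.1) → B ∈ t.1.1
  | [], _, _, _, hR, _ => hR.elim
  | [x], _, _, hs, hR, hx => hR.mem hAB hB (entails_of_mem hs)
      ((entails_of_mem (hx x (by simp))).cut (Prov.ldiv_irdiv A B))
  | x :: y :: xs, _, t, hs, ⟨z, hR, hRz⟩, hx =>
      mem_of_irdiv_mem_of_Rright hA hB hAB (y :: xs) z t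
        (hR.mem hAB hAB (entails_of_mem hs)
          ((entails_of_mem (hx x (by simp))).cut (Prov.ldiv_irdiv_irdiv A B)))
        hRz fun w hw => hx w (List.mem_cons_of_mem x hw)

open Classical in
/-- `⋁_{s ∈ X} ⋀ s.1.1`, a finite disjunction since the theories are subsets of `Φ`. -/
noncomputable def charFm (hfin : Φ.Finite) (X : Set (CanState Φ)) : Fm :=
  bigOr <| (hfin.toFinset.powerset.filter fun T : Finset Fm => ∃ s ∈ X, s.1.1 = ↑T).toList.map
    fun T : Finset Fm => bigAnd T.toList

theorem entails_charFm (hfin : Φ.Finite) {X : Set (CanState Φ)} {s : CanState Φ} (hs : s ∈ X) :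
    entails s.1.1 (charFm hfin X) := by
  classical
  have hsfin := hfin.subset s.subset
  refine ⟨hsfin.toFinset.toList, by simp, Prov.of_mem_bigOr (List.mem_map.2 ⟨hsfin.toFinset,
    Finset.mem_toList.2 (Finset.mem_filter.2 ⟨?_, s, hs, by simp⟩), rfl⟩)⟩
  simpa using s.subset

theorem Prov.charFm_of_forall (hfin : Φ.Finite) {X : Set (CanState Φ)} {F : Fm}
    (h : ∀ s ∈ X, entails s.1.1 F) : Prov (charFm hfin X) F := by
  classical
  refine Prov.bigOr_of_forall fun G hG => ?_
  obtain ⟨T, hT, rfl⟩ := List.mem_map.1 hG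
  obtain ⟨s, hs, hsT⟩ := (Finset.mem_filter.1 (Finset.mem_toList.1 hT)).2
  obtain ⟨γ, hγ, hp⟩ := h s hs
  exact (Prov.bigAnd_of_subset fun C hC =>
    Finset.mem_toList.2 (Finset.mem_coe.1 (hsT ▸ hγ C hC))).cut hp

def Truthful (Φ : Set Fm) (C : Fm) : Prop :=
  C ∈ Φ → ∀ a : CanState Φ, sat (canModel Φ) C a ↔ C ∈ a.1.1

theorem truthful_var (p : ℕ) : Truthful Φ (.var p) := fun hp _ => ⟨And.right, And.intro hp⟩

theorem truthful_top : Truthful Φ .top := fun h a =>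
  iff_of_true trivial (a.mem_of_entails h entails_top)

theorem truthful_bot : Truthful Φ .bot := fun _ a => iff_of_false id a.bot_not_mem

theorem truthful_and (hcl : ClosedSet Φ) {A B : Fm} (ihA : Truthful Φ A) (ihB : Truthful Φ B) :
    Truthful Φ (A.and B) := by
  intro hC a
  have hA := hcl.mem (.andL (.base hC))
  have hB := hcl.mem (.andR (.base hC))
  rw [sat, ihA hA, ihB hB]
  refine ⟨fun ⟨h₁, h₂⟩ => ?_, fun h => ⟨?_, ?_⟩⟩
  · exact a.mem_of_entails hC ((entails_of_mem h₁).and (entails_of_mem h₂))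
  · exact a.mem_of_entails hA ((entails_of_mem h).cut (.andE1 A B))
  · exact a.mem_of_entails hB ((entails_of_mem h).cut (.andE2 A B))

theorem truthful_or (hcl : ClosedSet Φ) {A B : Fm} (ihA : Truthful Φ A) (ihB : Truthful Φ B) :
    Truthful Φ (A.or B) := by
  intro hC a
  have hA := hcl.mem (.orL (.base hC))
  have hB := hcl.mem (.orR (.base hC))
  rw [sat, ihA hA, ihB hB]
  refine ⟨fun h => a.mem_of_entails hC ?_, fun h => ?_⟩
  · rcases h with h | h
    · exact (entails_of_mem h).cut (.orI1 A B)
    · exact (entails_of_mem h).cut (.orI2 A B)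
  · obtain ⟨d, hd, hda⟩ := a.exists_mem_of_entails_bigOr (δ := [A, B]) (by simp [hA, hB])
      ((entails_of_mem h).cut (Prov.or_mono (.id A) (.orI1 B _)))
    simp only [List.mem_cons, List.not_mem_nil, or_false] at hd
    rcases hd with rfl | rfl
    exacts [Or.inl hda, Or.inr hda]

theorem truthful_prod (hfin : Φ.Finite) (hcl : ClosedSet Φ) {X Y : Fm} (ihX : Truthful Φ X)
    (ihY : Truthful Φ Y) : Truthful Φ (X.prod Y) := by
  intro hC a
  have hX := hcl.mem (.prodL (.base hC))
  have hY := hcl.mem (.prodR (.base hC))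
  refine ⟨fun ⟨t, u, hR, ht, hu⟩ => ?_, fun h => ?_⟩
  · exact hR.mem hX hC (entails_of_mem ((ihX hX t).1 ht))
      ((entails_of_mem ((ihY hY u).1 hu)).cut (.resL1 (.id _)))
  · obtain ⟨t, u, hR, ht, hu⟩ := exists_canR_of_prod_mem hfin a hX hY h
    exact ⟨t, u, hR, (ihX hX t).2 ht, (ihY hY u).2 hu⟩

theorem truthful_ldiv (hfin : Φ.Finite) (hcl : ClosedSet Φ) {A B : Fm} (ihA : Truthful Φ A)
    (ihB : Truthful Φ B) : Truthful Φ (A.ldiv B) := by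
  intro hC a
  have hA := hcl.mem (.ldivL (.base hC))
  have hB := hcl.mem (.ldivR (.base hC))
  refine ⟨fun h => a.mem_of_entails hC (entails_ldiv_of_forall_canR hfin a hA ?_), ?_⟩
  · exact fun b c hR hb => entails_of_mem ((ihB hB c).1 (h b c hR ((ihA hA b).2 hb)))
  · exact fun h t u hR ht => (ihB hB u).2
      (hR.mem hA hB (entails_of_mem ((ihA hA t).1 ht)) (entails_of_mem h))

theorem truthful_rdiv (hfin : Φ.Finite) (hcl : ClosedSet Φ) {A B : Fm} (ihB : Truthful Φ B)
    (ihA : Truthful Φ A) : Truthful Φ (B.rdiv A) := by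
  intro hC a
  have hB := hcl.mem (.rdivL (.base hC))
  have hA := hcl.mem (.rdivR (.base hC))
  refine ⟨fun h => a.mem_of_entails hC (entails_rdiv_of_forall_canR hfin a hA ?_), ?_⟩
  · exact fun t u hR ht => entails_of_mem ((ihB hB u).1 (h t u hR ((ihA hA t).2 ht)))
  · exact fun h t u hR ht => (ihB hB u).2 (hR.mem hC hB (entails_of_mem h)
      ((entails_of_mem ((ihA hA t).1 ht)).cut (Prov.ldiv_of_rdiv (.id _))))

/-- `D := charFm hfin X` satisfies `D ⊢ A∖(B ∧ D)`, since `B` and `A∖∖B` pass from a state in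
`X` to its `R`-successors along states satisfying `A`; the induction rule gives `D ⊢ A∖∖B`. -/
theorem truthful_ildiv (hfin : Φ.Finite) (hcl : ClosedSet Φ) {A B : Fm} (ihA : Truthful Φ A)
    (ihB : Truthful Φ B) : Truthful Φ (A.ildiv B) := by
  intro hC a
  have hA := hcl.mem (.ildivL (.base hC))
  have hB := hcl.mem (.ildivR (.base hC))
  refine ⟨fun h => ?_, fun h xs t _ hR hxs => (ihB hB t).2
    (mem_of_ildiv_mem_of_Rleft hA hB hC xs a t h hR fun x hx => (ihA hA x).1 (hxs x hx))⟩
  set X := {s | sat (canModel Φ) (A.ildiv B) s}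
  have hD : Prov (charFm hfin X) (A.ldiv (B.and (charFm hfin X))) := by
    refine Prov.charFm_of_forall hfin fun s hs => entails_ldiv_of_forall_canR hfin s hA ?_
    intro b c hR hb
    obtain ⟨hcB, hcX⟩ := sat_ildiv_of_R (M := canModel Φ) hs hR ((ihA hA b).2 hb)
    exact (entails_of_mem ((ihB hB c).1 hcB)).and (entails_charFm hfin hcX)
  exact a.mem_of_entails hC ((entails_charFm hfin h).cut (Prov.ildiv_of_ldiv_and hD))

theorem truthful_irdiv (hfin : Φ.Finite) (hcl : ClosedSet Φ) {A B : Fm} (ihB : Truthful Φ B)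
    (ihA : Truthful Φ A) : Truthful Φ (B.irdiv A) := by
  intro hC a
  have hB := hcl.mem (.irdivL (.base hC))
  have hA := hcl.mem (.irdivR (.base hC))
  refine ⟨fun h => ?_, fun h xs t _ hR hxs => (ihB hB t).2
    (mem_of_irdiv_mem_of_Rright hA hB hC xs a t h hR fun x hx => (ihA hA x).1 (hxs x hx))⟩
  set X := {s | sat (canModel Φ) (B.irdiv A) s}
  have hD : Prov (charFm hfin X) ((B.and (charFm hfin X)).rdiv A) := by
    refine Prov.charFm_of_forall hfin fun s hs => entails_rdiv_of_forall_canR hfin s hA ?_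
    intro t u hR ht
    obtain ⟨huB, huX⟩ := sat_irdiv_of_R (M := canModel Φ) hs hR ((ihA hA t).2 ht)
    exact (entails_of_mem ((ihB hB u).1 huB)).and (entails_charFm hfin huX)
  exact a.mem_of_entails hC ((entails_charFm hfin h).cut (Prov.irdiv_of_rdiv_and hD))

theorem truthful (hfin : Φ.Finite) (hcl : ClosedSet Φ) (C : Fm) : Truthful Φ C := by
  induction C with
  | var p => exact truthful_var p
  | top => exact truthful_top
  | bot => exact truthful_bot
  | and A B ihA ihB => exact truthful_and hcl ihA ihB
  | or A B ihA ihB => exact truthful_or hcl ihA ihB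
  | prod A B ihA ihB => exact truthful_prod hfin hcl ihA ihB
  | ldiv A B ihA ihB => exact truthful_ldiv hfin hcl ihA ihB
  | rdiv B A ihB ihA => exact truthful_rdiv hfin hcl ihB ihA
  | ildiv A B ihA ihB => exact truthful_ildiv hfin hcl ihA ihB
  | irdiv B A ihB ihA => exact truthful_irdiv hfin hcl ihB ihA

end Truth

def Fm.subformulas : Fm → Set Fm
  | .var n => {.var n}
  | .top => {.top}
  | .bot => {.bot}
  | .and A B => insert (A.and B) (A.subformulas ∪ B.subformulas)
  | .or A B => insert (A.or B) (A.subformulas ∪ B.subformulas)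
  | .prod A B => insert (A.prod B) (A.subformulas ∪ B.subformulas)
  | .ldiv A B => insert (A.ldiv B) (A.subformulas ∪ B.subformulas)
  | .rdiv A B => insert (A.rdiv B) (A.subformulas ∪ B.subformulas)
  | .ildiv A B => insert (A.ildiv B) (insert (A.ldiv B) (A.subformulas ∪ B.subformulas))
  | .irdiv A B => insert (A.irdiv B) (insert (A.rdiv B) (A.subformulas ∪ B.subformulas))

namespace Fm

theorem finite_subformulas (C : Fm) : C.subformulas.Finite := by
  induction C <;> simp [subformulas, *]

theorem mem_subformulas_self (C : Fm) : C ∈ C.subformulas := by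
  cases C <;> simp [subformulas]

theorem subformulas_subset {C D : Fm} (h : D ∈ C.subformulas) :
    D.subformulas ⊆ C.subformulas := by
  induction C with
  | var | top | bot => simp_all [subformulas]
  | _ A B ihA ihB =>
    intro E hE
    simp only [subformulas, Set.mem_insert_iff, Set.mem_union] at h ⊢
    aesop (add norm simp subformulas)

end Fm

section ClosureFinite

theorem closure_subset_subformulas (Φ₀ : Set Fm) :
    {C | Closure Φ₀ C} ⊆ insert .top (insert .bot (⋃ A ∈ Φ₀, A.subformulas)) := by
  intro C h
  induction h with
  | base h => exact Or.inr (Or.inr (Set.mem_biUnion h (Fm.mem_subformulas_self _)))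
  | top => exact Or.inl rfl
  | bot => exact Or.inr (Or.inl rfl)
  | _ _ ih =>
    refine Set.mem_insert_of_mem _ (Set.mem_insert_of_mem _ ?_)
    simp only [Set.mem_insert_iff, Set.mem_iUnion, exists_prop, reduceCtorEq, false_or] at ih ⊢
    obtain ⟨A, hA, h⟩ := ih
    exact ⟨A, hA, Fm.subformulas_subset h (by simp [Fm.subformulas, Fm.mem_subformulas_self])⟩

theorem finite_closure {Φ₀ : Set Fm} (h : Φ₀.Finite) : {C | Closure Φ₀ C}.Finite :=
  (((h.biUnion fun A _ => A.finite_subformulas).insert _).insert _).subset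
    (closure_subset_subformulas Φ₀)

theorem closedSet_closure (Φ₀ : Set Fm) : ClosedSet {C | Closure Φ₀ C} := by
  refine Set.ext fun C => ⟨fun h => ?_, .base⟩
  induction h with
  | base h => exact h
  | top => exact .top
  | bot => exact .bot
  | andL _ ih => exact .andL ih
  | andR _ ih => exact .andR ih
  | orL _ ih => exact .orL ih
  | orR _ ih => exact .orR ih
  | prodL _ ih => exact .prodL ih
  | prodR _ ih => exact .prodR ih
  | ldivL _ ih => exact .ldivL ih
  | ldivR _ ih => exact .ldivR ih
  | rdivL _ ih => exact .rdivL ih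
  | rdivR _ ih => exact .rdivR ih
  | ildivL _ ih => exact .ildivL ih
  | ildivR _ ih => exact .ildivR ih
  | irdivL _ ih => exact .irdivL ih
  | irdivR _ ih => exact .irdivR ih
  | ildivDiv _ ih => exact .ildivDiv ih
  | irdivDiv _ ih => exact .irdivDiv ih

end ClosureFinite

theorem exists_canState_of_not_prov {Φ : Set Fm} (hfin : Φ.Finite) {A B : Fm} (hA : A ∈ Φ)
    (h : ¬ Prov A B) : ∃ a : CanState Φ, A ∈ a.1.1 ∧ ¬ entails a.1.1 B := by
  have hI : IsProvIdeal {G | Prov G B} := ⟨fun hp hG => hp.cut hG, .bot B,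
    fun hG hG' => .orE hG hG'⟩
  obtain ⟨a, hAa, ha, -⟩ := exists_canState hfin hI (Set.singleton_subset_iff.2 hA)
    fun G hG hGB => h ((entails_singleton.1 hG).cut hGB)
  exact ⟨a, hAa rfl, fun hB => ha B hB (.id B)⟩

/-- Weak completeness: every sequent valid in every Došen frame is provable in IDFNL. -/
theorem completeness (A B : Fm)
    (h : ∀ (S : Type) [Nonempty S] (M : DosenModel S), valid M A B) : Prov A B := by
  by_contra hAB
  set Φ := {C | Closure {A, B} C}
  have hfin : Φ.Finite := finite_closure (Set.toFinite _)
  have hcl : ClosedSet Φ := closedSet_closure _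
  have hA : A ∈ Φ := .base (Set.mem_insert A {B})
  have hB : B ∈ Φ := .base (Set.mem_insert_of_mem A rfl)
  obtain ⟨a, hAa, hBa⟩ := exists_canState_of_not_prov hfin hA hAB
  have hsatB := @h _ ⟨a⟩ (canModel Φ) a ((truthful hfin hcl A hA a).2 hAa)
  exact hBa (entails_of_mem ((truthful hfin hcl B hB a).1 hsatB))
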